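/- Let μ be a finite measure, 𝒟 a dyadic lattice, and b ∈ L²(μ) such that the Carleson condition Σ_{Q ⊂ R} ‖Δ_Q b‖²_{L²(μ)} ≤ A·μ(R) holds for every dyadic cube R (sum over a fixed subfamily 𝒢 of dyadic cubes). Then the paraproduct π_b f := Σ_{Q ∈ 𝒢} ⟨f⟩_{F^{(r-1)}(Q), μ} Δ_Q b, where F^{(r-1)}(Q) is the (r−1)-fold dyadic ancestor of Q, is bounded on L²(μ): ‖π_b f‖_{L²(μ)} ≤ C√A ‖f‖_{L²(μ)}. -/

import Mathlib

/-
The squared norm of the paraproduct is, by orthogonality of the martingale differences,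
`∑_Q w_Q ⟨f⟩²_{T Q}` with `w_Q = ‖Δ_Q b‖²` and `T Q = F^{(r-1)}(Q)`; since `T Q ⊇ Q`, the Carleson
condition for `b` makes `w` a Carleson sequence on the nested-or-disjoint family `T`, so it remains
to prove the Carleson embedding `∑_Q w_Q ⟨g⟩²_{T Q} ≤ 4A‖g‖²` for `g = |f|`.

Let `M g` be the maximal average of `g` over the cubes containing a point. For `t > 0` the level
set `{M g ≥ t}` is the disjoint union of the maximal cubes with average `≥ t`, so the packing
condition gives `∑_{⟨g⟩_{T Q} ≥ t} w_Q ≤ A μ{M g ≥ t}` and the averages give the weak type bound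
`t μ{M g ≥ t} ≤ ∫_{M g ≥ t} g`. Layer cake turns the first into `∑ w_Q ⟨g⟩² ≤ A‖M g‖²`, and the
second into `‖M g‖² ≤ 2∫ g · M g ≤ 2‖g‖² + ‖M g‖²/2`, i.e. Doob's bound `‖M g‖² ≤ 4‖g‖²`.
-/

open MeasureTheory
open scoped NNReal ENNReal

section NestedOrDisjoint

open scoped Classical

variable {α ι : Type*} {T : ι → Set α}

theorem exists_pairwiseDisjoint_subcover_of_nested_or_disjoint
    (hT : ∀ i j, T i ⊆ T j ∨ T j ⊆ T i ∨ Disjoint (T i) (T j)) (s : Finset ι) :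
    ∃ m ⊆ s, (m : Set ι).PairwiseDisjoint T ∧ ∀ i ∈ s, ∃ j ∈ m, T i ⊆ T j := by
  induction s using Finset.induction_on with
  | empty => exact ⟨∅, subset_rfl, by simp, by simp⟩
  | insert a s _ ih =>
    obtain ⟨m, hms, hdisj, hcov⟩ := ih
    by_cases ha : ∃ j ∈ m, T a ⊆ T j
    · refine ⟨m, hms.trans (Finset.subset_insert a s), hdisj, ?_⟩
      simpa [ha] using hcov
    push Not at ha
    refine ⟨insert a (m.filter fun j => ¬ T j ⊆ T a),
      Finset.insert_subset_insert a ((Finset.filter_subset _ _).trans hms), ?_, ?_⟩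
    · rw [Finset.coe_insert, Set.pairwiseDisjoint_insert]
      refine ⟨hdisj.subset (Finset.coe_subset.mpr (Finset.filter_subset _ _)), fun j hj _ => ?_⟩
      obtain ⟨hjm, hja⟩ := Finset.mem_filter.mp hj
      exact ((hT a j).resolve_left (ha j hjm)).resolve_left hja
    · intro i hi
      rcases Finset.mem_insert.mp hi with rfl | hi
      · exact ⟨i, Finset.mem_insert_self _ _, subset_rfl⟩
      obtain ⟨j, hjm, hij⟩ := hcov i hi
      by_cases hja : T j ⊆ T a
      · exact ⟨a, Finset.mem_insert_self _ _, hij.trans hja⟩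
      · exact ⟨j, Finset.mem_insert_of_mem (Finset.mem_filter.mpr ⟨hjm, hja⟩), hij⟩

theorem biUnion_eq_biUnion_of_cover {m s : Finset ι} (hms : m ⊆ s)
    (hcov : ∀ i ∈ s, ∃ j ∈ m, T i ⊆ T j) : ⋃ j ∈ m, T j = ⋃ i ∈ s, T i := by
  refine subset_antisymm (Set.biUnion_subset_biUnion_left hms) (Set.iUnion₂_subset fun i hi => ?_)
  obtain ⟨j, hj, hij⟩ := hcov i hi
  exact hij.trans (Set.subset_biUnion_of_mem (u := T) hj)

variable [MeasurableSpace α] {μ : Measure α} [IsFiniteMeasure μ]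
  (hT : ∀ i j, T i ⊆ T j ∨ T j ⊆ T i ∨ Disjoint (T i) (T j)) (hTm : ∀ i, MeasurableSet (T i))
include hT hTm

theorem sum_le_mul_measureReal_biUnion_of_packing {w : ι → ℝ} (hw : ∀ i, 0 ≤ w i)
    {A : ℝ} {s t : Finset ι}
    (hpack : ∀ j ∈ s, ∑ i ∈ t.filter (fun i => T i ⊆ T j), w i ≤ A * μ.real (T j))
    (hst : s ⊆ t) :
    ∑ i ∈ s, w i ≤ A * μ.real (⋃ i ∈ s, T i) := by
  obtain ⟨m, hms, hdisj, hcov⟩ := exists_pairwiseDisjoint_subcover_of_nested_or_disjoint hT s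
  rw [← biUnion_eq_biUnion_of_cover hms hcov]
  choose! top htop_mem htop_sub using hcov
  calc ∑ i ∈ s, w i = ∑ j ∈ m, ∑ i ∈ s with top i = j, w i :=
        (Finset.sum_fiberwise_of_maps_to htop_mem w).symm
    _ ≤ ∑ j ∈ m, ∑ i ∈ t with T i ⊆ T j, w i := by
        refine Finset.sum_le_sum fun j _ => Finset.sum_le_sum_of_subset_of_nonneg ?_
          fun i _ _ => hw i
        intro i hi
        obtain ⟨his, rfl⟩ := Finset.mem_filter.mp hi
        exact Finset.mem_filter.mpr ⟨hst his, htop_sub i his⟩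
    _ ≤ ∑ j ∈ m, A * μ.real (T j) := Finset.sum_le_sum fun j hj => hpack j (hms hj)
    _ = A * μ.real (⋃ j ∈ m, T j) := by
        rw [measureReal_biUnion_finset hdisj fun j _ => hTm j, Finset.mul_sum]

theorem mul_measureReal_biUnion_le_setIntegral {g : α → ℝ} (hg : Integrable g μ) {t : ℝ}
    {s : Finset ι} (h : ∀ i ∈ s, t * μ.real (T i) ≤ ∫ x in T i, g x ∂μ) :
    t * μ.real (⋃ i ∈ s, T i) ≤ ∫ x in ⋃ i ∈ s, T i, g x ∂μ := by
  obtain ⟨m, hms, hdisj, hcov⟩ := exists_pairwiseDisjoint_subcover_of_nested_or_disjoint hT s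
  rw [← biUnion_eq_biUnion_of_cover hms hcov, measureReal_biUnion_finset hdisj fun j _ => hTm j,
    integral_biUnion_finset m (fun j _ => hTm j) hdisj fun j _ => hg.integrableOn, Finset.mul_sum]
  exact Finset.sum_le_sum fun j hj => h j (hms hj)

end NestedOrDisjoint

noncomputable def maximalFunction {α ι : Type*} (s : Finset ι) (T : ι → Set α) (a : ι → ℝ≥0) :
    α → ℝ≥0 :=
  s.sup fun i => (T i).indicator fun _ => a i

section MaximalFunction

variable {α ι : Type*} {s : Finset ι} {T : ι → Set α} {a : ι → ℝ≥0}

theorem maximalFunction_le (x : α) : maximalFunction s T a x ≤ s.sup a := by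
  rw [maximalFunction, Finset.sup_apply]
  exact Finset.sup_mono_fun fun i _ => Set.indicator_le_self' (fun _ _ => zero_le) x

theorem setOf_le_maximalFunction {t : ℝ} (ht : 0 < t) :
    {x | t ≤ (maximalFunction s T a x : ℝ)} = ⋃ i ∈ s.filter (fun i => t ≤ a i), T i := by
  ext x
  have ht' : ⊥ < t.toNNReal := Real.toNNReal_pos.mpr ht
  simp only [Set.mem_ofPred_eq, ← Real.toNNReal_le_iff_le_coe, maximalFunction, Finset.sup_apply,
    Finset.le_sup_iff ht', Set.mem_iUnion, Finset.mem_filter, exists_prop]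
  refine exists_congr fun i => ?_
  by_cases hx : x ∈ T i
  · simp [hx, Real.toNNReal_le_iff_le_coe]
  · simp [hx, ht]

variable [MeasurableSpace α]

theorem measurable_maximalFunction (hTm : ∀ i, MeasurableSet (T i)) :
    Measurable (maximalFunction s T a) :=
  Finset.sup_induction measurable_const (fun _ hf _ hg => hf.sup hg)
    fun i _ => measurable_const.indicator (hTm i)

theorem memLp_maximalFunction (hTm : ∀ i, MeasurableSet (T i)) (μ : Measure α) [IsFiniteMeasure μ]
    (p : ℝ≥0∞) : MemLp (fun x => (maximalFunction s T a x : ℝ)) p μ :=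
  MemLp.of_bound (measurable_maximalFunction hTm).coe_nnreal_real.aestronglyMeasurable
    (s.sup a : ℝ≥0)
    (ae_of_all _ fun x => by simpa using maximalFunction_le x)

end MaximalFunction

section LayerCake

variable {α : Type*} [MeasurableSpace α]

theorem lintegral_sq_eq_lintegral_meas_le (μ : Measure α) {f : α → ℝ} (hf0 : 0 ≤ f)
    (hfm : AEMeasurable f μ) :
    ∫⁻ x, ENNReal.ofReal (f x ^ 2) ∂μ
      = ∫⁻ t in Set.Ioi 0, μ {x | t ≤ f x} * ENNReal.ofReal (2 * t) := by
  have h := lintegral_comp_eq_lintegral_meas_le_mul (g := fun t => 2 * t) μ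
    (ae_of_all _ hf0) hfm
    (fun _ _ => (continuous_const.mul continuous_id).intervalIntegrable _ _)
    (ae_restrict_of_forall_mem measurableSet_Ioi fun t (ht : 0 < t) => by positivity)
  have hsq (a : ℝ) : ∫ t in 0..a, 2 * t = a ^ 2 := by
    rw [intervalIntegral.integral_const_mul, integral_id]; ring
  simpa only [hsq] using h

theorem lintegral_sq_le_of_meas_le {β : Type*} [MeasurableSpace β] {ν : Measure β}
    {μ : Measure α} {f : β → ℝ} {g : α → ℝ} (hf0 : 0 ≤ f) (hfm : AEMeasurable f ν)
    (hg0 : 0 ≤ g) (hgm : AEMeasurable g μ) {C : ℝ≥0}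
    (h : ∀ t > 0, ν {x | t ≤ f x} ≤ (C : ℝ≥0∞) * μ {x | t ≤ g x}) :
    ∫⁻ x, ENNReal.ofReal (f x ^ 2) ∂ν ≤ C * ∫⁻ x, ENNReal.ofReal (g x ^ 2) ∂μ := by
  rw [lintegral_sq_eq_lintegral_meas_le ν hf0 hfm, lintegral_sq_eq_lintegral_meas_le μ hg0 hgm,
    ← lintegral_const_mul' _ _ ENNReal.coe_ne_top]
  refine setLIntegral_mono' measurableSet_Ioi fun t ht => ?_
  rw [← mul_assoc]
  exact mul_le_mul_left (h t ht) _

end LayerCake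

section Doob

variable {α : Type*} [MeasurableSpace α] {μ : Measure α} [IsFiniteMeasure μ]

theorem integral_sq_le_two_mul_integral_mul_of_weakType {M g : α → ℝ} (hM0 : 0 ≤ M)
    (hMm : Measurable M) (hM : MemLp M 2 μ) (hg0 : 0 ≤ g) (hg : MemLp g 2 μ)
    (hweak : ∀ t > 0, t * μ.real {x | t ≤ M x} ≤ ∫ x in {x | t ≤ M x}, g x ∂μ) :
    ∫ x, M x ^ 2 ∂μ ≤ 2 * ∫ x, g x * M x ∂μ := by
  set gμ := μ.withDensity fun x => ENNReal.ofReal (g x)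
  have hgM0 : ∀ x, 0 ≤ g x * M x := fun x => mul_nonneg (hg0 x) (hM0 x)
  have hlevel (t : ℝ) (ht : 0 < t) :
      μ {x | t ≤ M x} * ENNReal.ofReal (2 * t) ≤ 2 * gμ {x | t ≤ M x} := by
    have hmeas : MeasurableSet {x | t ≤ M x} := measurableSet_le measurable_const hMm
    calc μ {x | t ≤ M x} * ENNReal.ofReal (2 * t)
        = ENNReal.ofReal (2 * (t * μ.real {x | t ≤ M x})) := by
          rw [← ofReal_measureReal, ← ENNReal.ofReal_mul measureReal_nonneg]
          ring_nf
      _ ≤ ENNReal.ofReal (2 * ∫ x in {x | t ≤ M x}, g x ∂μ) :=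
          ENNReal.ofReal_le_ofReal (by linarith [hweak t ht])
      _ = 2 * gμ {x | t ≤ M x} := by
          rw [ENNReal.ofReal_mul zero_le_two, ofReal_integral_eq_lintegral_ofReal
            (hg.integrable one_le_two).integrableOn (ae_of_all _ hg0), withDensity_apply _ hmeas,
            ENNReal.ofReal_ofNat]
  have hlintegral : ∫⁻ x, ENNReal.ofReal (M x ^ 2) ∂μ
      ≤ ENNReal.ofReal 2 * ∫⁻ x, ENNReal.ofReal (g x * M x) ∂μ :=
    calc ∫⁻ x, ENNReal.ofReal (M x ^ 2) ∂μ
        = ∫⁻ t in Set.Ioi 0, μ {x | t ≤ M x} * ENNReal.ofReal (2 * t) :=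
          lintegral_sq_eq_lintegral_meas_le μ hM0 hMm.aemeasurable
      _ ≤ ∫⁻ t in Set.Ioi 0, 2 * gμ {x | t ≤ M x} :=
          setLIntegral_mono' measurableSet_Ioi hlevel
      _ = 2 * ∫⁻ x, ENNReal.ofReal (M x) ∂gμ := by
          rw [lintegral_const_mul' _ _ ENNReal.ofNat_ne_top,
            lintegral_eq_lintegral_meas_le _ (ae_of_all _ hM0) hMm.aemeasurable]
      _ = ENNReal.ofReal 2 * ∫⁻ x, ENNReal.ofReal (g x * M x) ∂μ := by
          rw [lintegral_withDensity_eq_lintegral_mul₀ hg.1.aemeasurable.ennreal_ofReal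
            hMm.ennreal_ofReal.aemeasurable]
          simp [ENNReal.ofReal_mul (hg0 _)]
  rwa [← ofReal_integral_eq_lintegral_ofReal hM.integrable_sq (ae_of_all _ fun x => sq_nonneg _),
    ← ofReal_integral_eq_lintegral_ofReal (f := fun x => g x * M x) (hg.integrable_mul hM)
      (ae_of_all _ hgM0),
    ← ENNReal.ofReal_mul zero_le_two,
    ENNReal.ofReal_le_ofReal_iff (mul_nonneg zero_le_two (integral_nonneg hgM0))] at hlintegral

theorem integral_sq_le_four_mul_integral_sq_of_weakType {M g : α → ℝ} (hM0 : 0 ≤ M)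
    (hMm : Measurable M) (hM : MemLp M 2 μ) (hg0 : 0 ≤ g) (hg : MemLp g 2 μ)
    (hweak : ∀ t > 0, t * μ.real {x | t ≤ M x} ≤ ∫ x in {x | t ≤ M x}, g x ∂μ) :
    ∫ x, M x ^ 2 ∂μ ≤ 4 * ∫ x, g x ^ 2 ∂μ := by
  have hgM := integral_sq_le_two_mul_integral_mul_of_weakType hM0 hMm hM hg0 hg hweak
  have hamgm : ∫ x, g x * M x ∂μ ≤ ∫ x, g x ^ 2 ∂μ + (∫ x, M x ^ 2 ∂μ) / 4 := by
    rw [← integral_div, ← integral_add hg.integrable_sq (hM.integrable_sq.div_const 4)]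
    exact integral_mono (hg.integrable_mul hM) (hg.integrable_sq.add (hM.integrable_sq.div_const 4))
      fun x => by nlinarith [sq_nonneg (g x - M x / 2)]
  linarith

end Doob

theorem mul_measureReal_le_setIntegral_of_le_div {α : Type*} [MeasurableSpace α] {μ : Measure α}
    {g : α → ℝ} (hg0 : 0 ≤ g) {s : Set α} {t : ℝ} (ht : t ≤ (∫ x in s, g x ∂μ) / μ.real s) :
    t * μ.real s ≤ ∫ x in s, g x ∂μ := by
  rcases measureReal_nonneg.eq_or_lt with h | h
  · rw [← h, mul_zero]
    exact integral_nonneg hg0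
  · exact (le_div_iff₀ h).mp ht

section Carleson

open scoped Classical

variable {α ι : Type*} [MeasurableSpace α] {μ : Measure α} [IsFiniteMeasure μ] {T : ι → Set α}
  {𝒢 : Finset ι} {w : ι → ℝ} {A : ℝ}

theorem sum_mul_sq_le_mul_integral_maximalFunction_sq
    (hT : ∀ i j, T i ⊆ T j ∨ T j ⊆ T i ∨ Disjoint (T i) (T j)) (hTm : ∀ i, MeasurableSet (T i))
    (hw : ∀ i, 0 ≤ w i) (hA : 0 ≤ A)
    (hpack : ∀ j ∈ 𝒢, ∑ i ∈ 𝒢.filter (fun i => T i ⊆ T j), w i ≤ A * μ.real (T j))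
    (a : ι → ℝ≥0) :
    ∑ i ∈ 𝒢, w i * (a i : ℝ) ^ 2 ≤ A * ∫ x, (maximalFunction 𝒢 T a x : ℝ) ^ 2 ∂μ := by
  set M : α → ℝ := fun x => maximalFunction 𝒢 T a x
  have hMm : Measurable M := (measurable_maximalFunction hTm).coe_nnreal_real
  -- Writing the sum as `∫ x² dν` lets layer cake compare `ν` and `μ` level by level.
  let ν : Measure ℝ≥0 := ∑ i ∈ 𝒢, ENNReal.ofReal (w i) • Measure.dirac (a i)
  have hν (t : ℝ) (ht : 0 < t) : ν {x | t ≤ (x : ℝ)} ≤ ENNReal.ofReal A * μ {x | t ≤ M x} := by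
    have hmeas : MeasurableSet {x : ℝ≥0 | t ≤ (x : ℝ)} :=
      measurableSet_le measurable_const measurable_coe_nnreal_real
    have hpack_t := sum_le_mul_measureReal_biUnion_of_packing (μ := μ) hT hTm hw
      (s := 𝒢.filter fun i => t ≤ a i) (fun j hj => hpack j (Finset.mem_filter.mp hj).1)
      (Finset.filter_subset _ _)
    calc ν {x | t ≤ (x : ℝ)} = ∑ i ∈ 𝒢.filter (fun i => t ≤ a i), ENNReal.ofReal (w i) := by
          simp [ν, Measure.dirac_apply' _ hmeas, Set.indicator_apply, Finset.sum_filter]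
      _ = ENNReal.ofReal (∑ i ∈ 𝒢.filter (fun i => t ≤ a i), w i) :=
          (ENNReal.ofReal_sum_of_nonneg fun i _ => hw i).symm
      _ ≤ ENNReal.ofReal (A * μ.real (⋃ i ∈ 𝒢.filter (fun i => t ≤ a i), T i)) :=
          ENNReal.ofReal_le_ofReal hpack_t
      _ = ENNReal.ofReal A * μ {x | t ≤ M x} := by
          rw [setOf_le_maximalFunction ht, ENNReal.ofReal_mul hA,
            ofReal_measureReal (measure_ne_top μ _)]
  have h : _ ≤ ENNReal.ofReal A * _ := lintegral_sq_le_of_meas_le (fun x => x.coe_nonneg)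
    measurable_coe_nnreal_real.aemeasurable (fun x => NNReal.coe_nonneg _) hMm.aemeasurable hν
  have hsum : ∫⁻ x, ENNReal.ofReal ((x : ℝ) ^ 2) ∂ν
      = ENNReal.ofReal (∑ i ∈ 𝒢, w i * (a i : ℝ) ^ 2) := by
    rw [ENNReal.ofReal_sum_of_nonneg fun i _ => mul_nonneg (hw i) (sq_nonneg _)]
    simp [ν, lintegral_finsetSum_measure, ENNReal.ofReal_mul (hw _)]
  rw [hsum, ← ofReal_integral_eq_lintegral_ofReal (memLp_maximalFunction hTm μ 2).integrable_sq
    (ae_of_all _ fun x => sq_nonneg _), ← ENNReal.ofReal_mul hA] at h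
  exact (ENNReal.ofReal_le_ofReal_iff (mul_nonneg hA (integral_nonneg fun x => sq_nonneg _))).mp h

theorem sum_mul_sq_setIntegral_div_le_of_packing
    (hT : ∀ i j, T i ⊆ T j ∨ T j ⊆ T i ∨ Disjoint (T i) (T j)) (hTm : ∀ i, MeasurableSet (T i))
    (hw : ∀ i, 0 ≤ w i) (hA : 0 ≤ A)
    (hpack : ∀ j ∈ 𝒢, ∑ i ∈ 𝒢.filter (fun i => T i ⊆ T j), w i ≤ A * μ.real (T j))
    {g : α → ℝ} (hg0 : 0 ≤ g) (hg : MemLp g 2 μ) :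
    ∑ i ∈ 𝒢, w i * ((∫ x in T i, g x ∂μ) / μ.real (T i)) ^ 2 ≤ 4 * A * ∫ x, g x ^ 2 ∂μ := by
  let a : ι → ℝ≥0 := fun i => ⟨(∫ x in T i, g x ∂μ) / μ.real (T i),
    div_nonneg (integral_nonneg hg0) measureReal_nonneg⟩
  have hweak (t : ℝ) (ht : 0 < t) :
      t * μ.real {x | t ≤ (maximalFunction 𝒢 T a x : ℝ)}
        ≤ ∫ x in {x | t ≤ (maximalFunction 𝒢 T a x : ℝ)}, g x ∂μ := by
    rw [setOf_le_maximalFunction ht]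
    exact mul_measureReal_biUnion_le_setIntegral hT hTm (hg.integrable one_le_two) fun i hi =>
      mul_measureReal_le_setIntegral_of_le_div hg0 (Finset.mem_filter.mp hi).2
  calc ∑ i ∈ 𝒢, w i * ((∫ x in T i, g x ∂μ) / μ.real (T i)) ^ 2
      = ∑ i ∈ 𝒢, w i * (a i : ℝ) ^ 2 := rfl
    _ ≤ A * ∫ x, (maximalFunction 𝒢 T a x : ℝ) ^ 2 ∂μ :=
        sum_mul_sq_le_mul_integral_maximalFunction_sq hT hTm hw hA hpack a
    _ ≤ A * (4 * ∫ x, g x ^ 2 ∂μ) := by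
        refine mul_le_mul_of_nonneg_left ?_ hA
        exact integral_sq_le_four_mul_integral_sq_of_weakType (fun x => NNReal.coe_nonneg _)
          (measurable_maximalFunction hTm).coe_nnreal_real (memLp_maximalFunction hTm μ 2) hg0 hg
          hweak
    _ = 4 * A * ∫ x, g x ^ 2 ∂μ := by ring

end Carleson

theorem integral_sq_sum_eq_of_orthogonal {α ι : Type*} [MeasurableSpace α] {μ : Measure α}
    {s : Finset ι} {D : ι → α → ℝ} (hD : ∀ i ∈ s, MemLp (D i) 2 μ)
    (horth : ∀ i ∈ s, ∀ j ∈ s, i ≠ j → ∫ x, D i x * D j x ∂μ = 0) (c : ι → ℝ) :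
    ∫ x, (∑ i ∈ s, c i * D i x) ^ 2 ∂μ = ∑ i ∈ s, c i ^ 2 * ∫ x, D i x ^ 2 ∂μ := by
  have hint : ∀ i ∈ s, ∀ j ∈ s, Integrable (fun x => c i * c j * (D i x * D j x)) μ :=
    fun i hi j hj => ((hD i hi).integrable_mul (hD j hj)).const_mul _
  have hexpand (x : α) : (∑ i ∈ s, c i * D i x) ^ 2
      = ∑ i ∈ s, ∑ j ∈ s, c i * c j * (D i x * D j x) := by
    rw [sq, Finset.sum_mul_sum]
    exact Finset.sum_congr rfl fun i _ => Finset.sum_congr rfl fun j _ => by ring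
  simp only [hexpand]
  rw [integral_finsetSum _ fun i hi => integrable_finsetSum _ (hint i hi)]
  refine Finset.sum_congr rfl fun i hi => ?_
  rw [integral_finsetSum _ (hint i hi), Finset.sum_eq_single_of_mem i hi fun j hj hji => by
    rw [integral_const_mul, horth i hi j hj hji.symm, mul_zero], integral_const_mul]
  simp only [sq]

theorem abs_setIntegral_div_le {α : Type*} [MeasurableSpace α] {μ : Measure α} (f : α → ℝ)
    (s : Set α) : |(∫ x in s, f x ∂μ) / μ.real s| ≤ (∫ x in s, |f x| ∂μ) / μ.real s := by
  rw [abs_div, abs_of_nonneg measureReal_nonneg]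
  exact div_le_div_of_nonneg_right abs_integral_le_integral_abs measureReal_nonneg

theorem subset_iterate_of_subset {α ι : Type*} {S : ι → Set α} {F : ι → ι}
    (hF : ∀ i, S i ⊆ S (F i)) (k : ℕ) (i : ι) : S i ⊆ S (F^[k] i) := by
  induction k with
  | zero => rfl
  | succ k ih => exact ih.trans (by rw [Function.iterate_succ_apply']; exact hF _)

open scoped Classical in
theorem paraproduct_bounded_general {α ι : Type*} [MeasurableSpace α]
    (μ : Measure α) [IsFiniteMeasure μ]
    (S : ι → Set α) (hSm : ∀ Q, MeasurableSet (S Q))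
    (hlat : ∀ Q R, S Q ⊆ S R ∨ S R ⊆ S Q ∨ Disjoint (S Q) (S R))
    (Fa : ι → ι) (hFa : ∀ Q, S Q ⊆ S (Fa Q))
    (r : ℕ)
    (𝒢 : Finset ι) (A : ℝ) (hA : 0 ≤ A)
    (Db : ι → α → ℝ) (hD2 : ∀ Q, MemLp (Db Q) 2 μ)
    (horth : ∀ Q ∈ 𝒢, ∀ Q' ∈ 𝒢, Q ≠ Q' → ∫ x, Db Q x * Db Q' x ∂μ = 0)
    (hCarl : ∀ R : ι,
      ∑ Q ∈ 𝒢.filter (fun Q => S Q ⊆ S R), ∫ x, (Db Q x) ^ 2 ∂μ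
        ≤ A * (μ (S R)).toReal)
    (f : α → ℝ) (hf : MemLp f 2 μ) :
    ∫ x, (∑ Q ∈ 𝒢,
        ((∫ y in S (Fa^[r - 1] Q), f y ∂μ) / (μ (S (Fa^[r - 1] Q))).toReal)
          * Db Q x) ^ 2 ∂μ
      ≤ 4 * A * ∫ x, (f x) ^ 2 ∂μ := by
  set T : ι → Set α := fun Q => S (Fa^[r - 1] Q)
  have hpack (R : ι) : ∑ Q ∈ 𝒢.filter (fun Q => T Q ⊆ T R), ∫ x, Db Q x ^ 2 ∂μ
      ≤ A * μ.real (T R) := by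
    refine le_trans (Finset.sum_le_sum_of_subset_of_nonneg ?_ fun Q _ _ => ?_) (hCarl _)
    · exact Finset.monotone_filter_right _ fun Q _ hQ => (subset_iterate_of_subset hFa _ Q).trans hQ
    · exact integral_nonneg fun x => sq_nonneg _
  calc _ = ∑ Q ∈ 𝒢, ((∫ y in T Q, f y ∂μ) / μ.real (T Q)) ^ 2 * ∫ x, Db Q x ^ 2 ∂μ :=
        integral_sq_sum_eq_of_orthogonal (fun Q _ => hD2 Q) horth _
    _ ≤ ∑ Q ∈ 𝒢, (∫ x, Db Q x ^ 2 ∂μ) * ((∫ y in T Q, |f y| ∂μ) / μ.real (T Q)) ^ 2 := by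
        refine Finset.sum_le_sum fun Q _ => ?_
        rw [mul_comm, ← sq_abs]
        exact mul_le_mul_of_nonneg_left
          (pow_le_pow_left₀ (abs_nonneg _) (abs_setIntegral_div_le f _) 2)
          (integral_nonneg fun x => sq_nonneg _)
    _ ≤ 4 * A * ∫ x, |f x| ^ 2 ∂μ :=
        sum_mul_sq_setIntegral_div_le_of_packing (fun Q R => hlat _ _) (fun Q => hSm _)
          (fun Q => integral_nonneg fun x => sq_nonneg _) hA (fun R _ => hpack R)
          (fun x => abs_nonneg (f x)) hf.abs
    _ = 4 * A * ∫ x, f x ^ 2 ∂μ := by simp only [sq_abs]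

open scoped Classical in
/-- boundedness of the paraproduct.  In a dyadic lattice (cubes `S Q`,
nested or disjoint, father map `Fa`), let `Db Q = Δ_Q b` be the pairwise orthogonal
martingale differences of `b` over a subfamily `𝒢` of good cubes, satisfying the
Carleson condition `Σ_{Q ∈ 𝒢, Q ⊆ R} ‖Δ_Q b‖² ≤ A·μ(R)` for every dyadic cube `R`.
Then the paraproduct `π_b f = Σ_{Q ∈ 𝒢} ⟨f⟩_{F^{(r-1)}(Q),μ} Δ_Q b` satisfies
`‖π_b f‖_{L²(μ)} ≤ 2√A‖f‖_{L²(μ)}`, i.e. `‖π_b f‖² ≤ 4A‖f‖²`. -/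
theorem paraproduct_bounded {α ι : Type*} [MeasurableSpace α]
    (μ : Measure α) [IsFiniteMeasure μ]
    (S : ι → Set α) (hSm : ∀ Q, MeasurableSet (S Q))
    (hlat : ∀ Q R, S Q ⊆ S R ∨ S R ⊆ S Q ∨ Disjoint (S Q) (S R))
    (Fa : ι → ι) (hFa : ∀ Q, S Q ⊆ S (Fa Q))
    (r : ℕ) (hr : 1 ≤ r)
    (𝒢 : Finset ι) (A : ℝ) (hA : 0 ≤ A)
    (Db : ι → α → ℝ) (hDm : ∀ Q, Measurable (Db Q)) (hD2 : ∀ Q, MemLp (Db Q) 2 μ)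
    (horth : ∀ Q ∈ 𝒢, ∀ Q' ∈ 𝒢, Q ≠ Q' → ∫ x, Db Q x * Db Q' x ∂μ = 0)
    (hCarl : ∀ R : ι,
      ∑ Q ∈ 𝒢.filter (fun Q => S Q ⊆ S R), ∫ x, (Db Q x) ^ 2 ∂μ
        ≤ A * (μ (S R)).toReal)
    (f : α → ℝ) (hfm : Measurable f) (hf : MemLp f 2 μ) :
    ∫ x, (∑ Q ∈ 𝒢,
        ((∫ y in S (Fa^[r - 1] Q), f y ∂μ) / (μ (S (Fa^[r - 1] Q))).toReal)
          * Db Q x) ^ 2 ∂μ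
      ≤ 4 * A * ∫ x, (f x) ^ 2 ∂μ :=
  paraproduct_bounded_general μ S hSm hlat Fa hFa r 𝒢 A hA Db hD2 horth hCarl f hf
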